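/- Suppose r_0·T_OPT = Σ_p f̂_p·τ_p + Σ_i a_i·(ω_i − ω_{i−1}) and Σ_p f̂_p·τ_p ≥ ω_r·r_0 − Σ_i (a_i + (a_i/r_0)·Σ_p f̂_p·q'_{i,p})·(ω_i − ω_{i−1}), with all quantities nonnegative, ω_r = T_f > 0, Σ_p f̂_p = r_0, and Σ_i λ_i·(ω_i − ω_{i−1}) ≤ (ω_r − ω_0)·sup_i λ_i where λ_i = (a_i/r_0)·Σ_p f̂_p·q'_{i,p}. Then T_OPT/T_f ≥ 1 − (1/r_0²)·sup_i a_i·Σ_p f̂_p·q'_{i,p}. -/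

import Mathlib

/-! The completion-time relation and the transit-time bound combine to
`r₀·T_OPT ≥ r₀·T_f − Σ_i λ_i (ω_i − ω_{i−1})`: the sink-inflow terms `a_i` cancel, leaving only the
queueing-delay terms. These are at most `T_f · sup_i λ_i`, and `sup_i λ_i = (sup_i a_i Σ_p f̂_p q'_{i,p}) / r₀`;
dividing by `r₀ T_f` gives the bound. -/

lemma iSup_div_mul_eq_iSup_mul_div {ι : Type*} {r : ℝ} (hr : 0 ≤ r) (f g : ι → ℝ) :
    ⨆ i, f i / r * g i = (⨆ i, f i * g i) / r := by
  rw [div_eq_mul_inv, Real.iSup_mul_of_nonneg (inv_nonneg.2 hr)]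
  exact iSup_congr fun i => by ring

lemma one_sub_div_sq_mul_le_div {r T T' M : ℝ} (hr : 0 < r) (hT' : 0 < T')
    (h : T' * r - T' * (M / r) ≤ r * T) : 1 - 1 / r ^ 2 * M ≤ T / T' := by
  rw [le_div_iff₀ hT']
  have h' : T' - T' * M / r ^ 2 ≤ T := by
    rw [← mul_le_mul_iff_of_pos_left hr]
    calc r * (T' - T' * M / r ^ 2) = T' * r - T' * (M / r) := by field_simp
      _ ≤ r * T := h
  calc (1 - 1 / r ^ 2 * M) * T' = T' - T' * M / r ^ 2 := by ring
    _ ≤ T := h'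

open Finset in
theorem stmt_12_general {P : Type*} [Fintype P]
    (fhat τ : P → ℝ) (a : ℕ → ℝ) (ω : ℕ → ℝ) (q' : ℕ → P → ℝ)
    (r0 TOPT Tf : ℝ)
    (hr0 : 0 < r0) (hTf : 0 < Tf) (hω0 : 0 ≤ ω 0)
    (hfhat : ∀ p, 0 ≤ fhat p)
    (ha : ∀ i, 0 ≤ a i) (hq : ∀ i p, 0 ≤ q' i p)
    (hsum1 : Summable (fun i : ℕ => a i * (ω (i + 1) - ω i)))
    (hsum2 : Summable (fun i : ℕ => (a i / r0 * ∑ p : P, fhat p * q' i p) * (ω (i + 1) - ω i)))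
    (h1 : r0 * TOPT = (∑ p : P, fhat p * τ p) + ∑' i : ℕ, a i * (ω (i + 1) - ω i))
    (h2 : (∑ p : P, fhat p * τ p) ≥
      Tf * r0 - ∑' i : ℕ, (a i + a i / r0 * ∑ p : P, fhat p * q' i p) * (ω (i + 1) - ω i))
    (h3 : ∑' i : ℕ, (a i / r0 * ∑ p : P, fhat p * q' i p) * (ω (i + 1) - ω i) ≤
      (Tf - ω 0) * ⨆ i : ℕ, a i / r0 * ∑ p : P, fhat p * q' i p) :
    TOPT / Tf ≥ 1 - (1 / r0 ^ 2) * ⨆ i : ℕ, a i * ∑ p : P, fhat p * q' i p := by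
  set M := ⨆ i : ℕ, a i * ∑ p : P, fhat p * q' i p
  have hM : 0 ≤ M := Real.iSup_nonneg fun i =>
    mul_nonneg (ha i) (sum_nonneg fun p _ => mul_nonneg (hfhat p) (hq i p))
  have hqueue : ∑' i : ℕ, (a i / r0 * ∑ p : P, fhat p * q' i p) * (ω (i + 1) - ω i) ≤
      Tf * (M / r0) := by
    refine h3.trans ?_
    rw [iSup_div_mul_eq_iSup_mul_div hr0.le]
    gcongr
    linarith
  have hsplit : ∑' i : ℕ, (a i + a i / r0 * ∑ p : P, fhat p * q' i p) * (ω (i + 1) - ω i) =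
      ∑' i : ℕ, a i * (ω (i + 1) - ω i) +
        ∑' i : ℕ, (a i / r0 * ∑ p : P, fhat p * q' i p) * (ω (i + 1) - ω i) := by
    rw [← hsum1.tsum_add hsum2]
    exact tsum_congr fun i => by ring
  exact one_sub_div_sq_mul_le_div hr0 hTf (by linarith)

open Finset in
/-- Core of Lemma 6 (combining Lemmas 5, 4 and 7): from the completion-time relation,
the path-wise lower bound on transit times and the telescoping bound on the
queueing-delay terms, conclude
`T_OPT/T_f ≥ 1 − (1/r0²)·sup_i a_i·Σ_p f̂_p q'_{i,p}`. -/
theorem stmt_12 {P : Type*} [Fintype P]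
    (fhat τ : P → ℝ) (a : ℕ → ℝ) (ω : ℕ → ℝ) (q' : ℕ → P → ℝ)
    (r0 TOPT Tf : ℝ)
    (hr0 : 0 < r0) (hTf : 0 < Tf) (hω0 : 0 ≤ ω 0)
    (hfhat : ∀ p, 0 ≤ fhat p) (hτ : ∀ p, 0 ≤ τ p)
    (ha : ∀ i, 0 ≤ a i) (hq : ∀ i p, 0 ≤ q' i p)
    (hωmono : Monotone ω)
    (hval : ∑ p : P, fhat p = r0)
    (hsum1 : Summable (fun i : ℕ => a i * (ω (i + 1) - ω i)))
    (hsum2 : Summable (fun i : ℕ => (a i / r0 * ∑ p : P, fhat p * q' i p) * (ω (i + 1) - ω i)))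
    (hbdd : BddAbove (Set.range fun i : ℕ => a i * ∑ p : P, fhat p * q' i p))
    (h1 : r0 * TOPT = (∑ p : P, fhat p * τ p) + ∑' i : ℕ, a i * (ω (i + 1) - ω i))
    (h2 : (∑ p : P, fhat p * τ p) ≥
      Tf * r0 - ∑' i : ℕ, (a i + a i / r0 * ∑ p : P, fhat p * q' i p) * (ω (i + 1) - ω i))
    (h3 : ∑' i : ℕ, (a i / r0 * ∑ p : P, fhat p * q' i p) * (ω (i + 1) - ω i) ≤
      (Tf - ω 0) * ⨆ i : ℕ, a i / r0 * ∑ p : P, fhat p * q' i p) :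
    TOPT / Tf ≥ 1 - (1 / r0 ^ 2) * ⨆ i : ℕ, a i * ∑ p : P, fhat p * q' i p :=
  stmt_12_general fhat τ a ω q' r0 TOPT Tf hr0 hTf hω0 hfhat ha hq hsum1 hsum2 h1 h2 h3
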